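/- Key lower bound in the ℓ¹ counterexample: let m ∈ ℕ, let ε_1, …, ε_m be independent Rademacher variables, and for i = 1, …, m set v_i := 2^{−2^i} ∑_{k=1}^{2^{2^i}} e_k ∈ ℓ¹. Then for any real scalars α_1, …, α_m, E‖∑_{i=1}^m ε_i α_i v_i‖_{ℓ¹} ≥ ∑_{i=1}^m (1 − 2^{−2^{i-1}})|α_i| − ∑_{i=1}^m 2^{−2^{i-1}}|α_i| ≥ ∑_{i=1}^m |α_i| − 2∑_{i=1}^m 2^{−2^{i-1}}|α_i|. In particular, with α_i = 1/(i+1), E‖∑_{i=1}^m ε_i α_i v_i‖_{ℓ¹} ≳ log m. -/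

import Mathlib

/-!
For every choice of signs, restrict the ℓ¹ norm to the disjoint blocks
`B_i = [2^{2^i}, 2^{2^{i+1}})` and use `‖∑ y‖ ≥ 2‖y_i‖ - ∑ ‖y‖` coordinatewise on `B_i`: this
bounds the norm below by `∑_i (2 ‖α_i v_{i+1}‖_{B_i} - ‖α_i v_{i+1}‖) ≥ ∑_i (1 - 2·2^{-2^i}) |α_i|`,
because `v_{i+1}` puts mass `1 - 2^{-2^i}` on `B_i` and has norm one. Averaging over the signs
gives the first bound. For `α_i = 1/(i+2)` the weights `1 - 2·2^{-2^i}` are at least `1/2` when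
`i ≥ 1`, and `1/(i+2) ≥ (log (i+1) - log i)/3` telescopes to `log m`.
-/

noncomputable section

instance : Fact ((1 : ENNReal) ≤ 1) := ⟨le_rfl⟩

/-- The sequence space ℓ¹. -/
abbrev EllOne : Type := lp (fun _ : ℕ => ℝ) 1

/-- Expectation `E‖∑_{j} ε_j x_j‖` over independent random signs. -/
def radAvg {X : Type*} [NormedAddCommGroup X]
    (N : ℕ) (x : Fin N → X) : ℝ :=
  ((2 : ℝ) ^ N)⁻¹ *
    ∑ σ : Fin N → Bool, ‖∑ j, (if σ j then x j else - x j)‖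

/-- `v_i = 2^{−2^i} ∑_{k=1}^{2^{2^i}} e_k ∈ ℓ¹`: the normalized indicator of the first
`2^{2^i}` coordinates. -/
def vBlock (i : ℕ) : EllOne :=
  ((2 : ℝ) ^ (2 ^ i))⁻¹ • ∑ k ∈ Finset.range (2 ^ 2 ^ i), lp.single 1 k (1 : ℝ)

open Finset

theorem two_mul_norm_sub_sum_norm_le_norm_sum {ι E : Type*} [SeminormedAddCommGroup E]
    {s : Finset ι} {j : ι} (hj : j ∈ s) (y : ι → E) :
    2 * ‖y j‖ - ∑ i ∈ s, ‖y i‖ ≤ ‖∑ i ∈ s, y i‖ := by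
  classical
  rw [← add_sum_erase s y hj, ← add_sum_erase s (‖y ·‖) hj]
  have := norm_sum_le (s.erase j) y
  have := norm_sub_le_norm_add (y j) (∑ i ∈ s.erase j, y i)
  linarith

theorem sum_two_mul_sum_norm_sub_le_sum_norm_sum {ι α : Type*} {E : α → Type*}
    [∀ k, SeminormedAddCommGroup (E k)] [DecidableEq α] {s : Finset ι} {B : ι → Finset α}
    (hB : (s : Set ι).PairwiseDisjoint B) (y : ι → ∀ k, E k) :
    ∑ j ∈ s, (2 * ∑ k ∈ B j, ‖y j k‖ - ∑ k ∈ s.biUnion B, ‖y j k‖) ≤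
      ∑ k ∈ s.biUnion B, ‖∑ i ∈ s, y i k‖ := by
  calc ∑ j ∈ s, (2 * ∑ k ∈ B j, ‖y j k‖ - ∑ k ∈ s.biUnion B, ‖y j k‖)
      = ∑ j ∈ s, ∑ k ∈ B j, (2 * ‖y j k‖ - ∑ i ∈ s, ‖y i k‖) := by
        simp only [sum_sub_distrib, mul_sum, ← sum_biUnion hB (f := fun k => ∑ i ∈ s, ‖y i k‖)]
        rw [sum_comm (s := s.biUnion B)]
    _ ≤ ∑ j ∈ s, ∑ k ∈ B j, ‖∑ i ∈ s, y i k‖ :=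
        sum_le_sum fun j hj => sum_le_sum fun k _ =>
          two_mul_norm_sub_sum_norm_le_norm_sum hj (fun i => y i k)
    _ = ∑ k ∈ s.biUnion B, ‖∑ i ∈ s, y i k‖ := (sum_biUnion hB).symm

theorem lp.sum_norm_apply_le_norm {α : Type*} {E : α → Type*} [∀ k, NormedAddCommGroup (E k)]
    (f : lp E 1) (s : Finset α) : ∑ k ∈ s, ‖f k‖ ≤ ‖f‖ := by
  simpa using lp.sum_rpow_le_norm_rpow (p := 1) (by simp) f s

theorem lp.sum_two_mul_sum_norm_sub_le_norm_sum {ι α : Type*} {E : α → Type*}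
    [∀ k, NormedAddCommGroup (E k)] [DecidableEq α] {s : Finset ι} {B : ι → Finset α}
    (hB : (s : Set ι).PairwiseDisjoint B) (z : ι → lp E 1) :
    ∑ j ∈ s, (2 * ∑ k ∈ B j, ‖z j k‖ - ∑ k ∈ s.biUnion B, ‖z j k‖) ≤ ‖∑ i ∈ s, z i‖ := by
  have hcoe (k : α) : (∑ i ∈ s, z i : lp E 1) k = ∑ i ∈ s, z i k := by
    rw [lp.coeFn_sum, Finset.sum_apply]
  calc _ ≤ ∑ k ∈ s.biUnion B, ‖(∑ i ∈ s, z i : lp E 1) k‖ := by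
        simpa only [hcoe] using sum_two_mul_sum_norm_sub_le_sum_norm_sum hB (fun i k => z i k)
    _ ≤ ‖∑ i ∈ s, z i‖ := lp.sum_norm_apply_le_norm _ _

theorem le_radAvg_of_forall_le {X : Type*} [NormedAddCommGroup X] {m : ℕ} {x : Fin m → X}
    {L : ℝ} (h : ∀ σ : Fin m → Bool, L ≤ ‖∑ j, (if σ j then x j else - x j)‖) :
    L ≤ radAvg m x := by
  rw [radAvg, inv_mul_eq_div, le_div_iff₀ (by positivity)]
  calc L * 2 ^ m = ∑ _σ : Fin m → Bool, L := by simp [mul_comm]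
    _ ≤ _ := sum_le_sum fun σ _ => h σ

theorem vBlock_apply (i k : ℕ) :
    vBlock i k = if k < 2 ^ 2 ^ i then ((2 : ℝ) ^ 2 ^ i)⁻¹ else 0 := by
  rw [vBlock, lp.coeFn_smul]
  simp only [Pi.smul_apply, lp.coeFn_sum, Finset.sum_apply, lp.single_apply]
  split_ifs <;> simp_all

theorem norm_vBlock_le_one (i : ℕ) : ‖vBlock i‖ ≤ 1 := by
  rw [vBlock, norm_smul]
  calc _ ≤ ‖((2 : ℝ) ^ 2 ^ i)⁻¹‖ * ∑ k ∈ range (2 ^ 2 ^ i), ‖(lp.single 1 k (1 : ℝ) : EllOne)‖ :=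
        mul_le_mul_of_nonneg_left (norm_sum_le _ _) (norm_nonneg _)
    _ = 1 := by simp [lp.norm_single]

theorem monotone_two_pow_two_pow : Monotone fun n : ℕ => 2 ^ 2 ^ n := fun _ _ h =>
  Nat.pow_le_pow_right two_pos (Nat.pow_le_pow_right two_pos h)

theorem sum_Ico_norm_vBlock_succ (i : ℕ) :
    ∑ k ∈ Ico (2 ^ 2 ^ i) (2 ^ 2 ^ (i + 1)), ‖vBlock (i + 1) k‖ = 1 - ((2 : ℝ) ^ 2 ^ i)⁻¹ := by
  rw [sum_congr rfl fun k hk => by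
    rw [vBlock_apply, if_pos (mem_Ico.mp hk).2, Real.norm_of_nonneg (by positivity)]]
  rw [sum_const, Nat.card_Ico, nsmul_eq_mul, Nat.cast_sub (monotone_two_pow_two_pow i.le_succ)]
  push_cast
  rw [pow_succ, pow_mul]
  field_simp

theorem pairwiseDisjoint_Ico_two_pow_two_pow {m : ℕ} :
    ((univ : Finset (Fin m)) : Set (Fin m)).PairwiseDisjoint
      fun j => Ico (2 ^ 2 ^ (j : ℕ)) (2 ^ 2 ^ ((j : ℕ) + 1)) := by
  intro i _ j _ hij
  simpa [Function.onFun, ← disjoint_coe] using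
    monotone_two_pow_two_pow.pairwise_disjoint_on_Ico_succ (Fin.val_injective.ne hij)

theorem sum_one_sub_two_mul_mul_abs_le_norm_signed_sum {m : ℕ} (α : Fin m → ℝ)
    (σ : Fin m → Bool) :
    ∑ j : Fin m, (1 - 2 * ((2 : ℝ) ^ 2 ^ (j : ℕ))⁻¹) * |α j| ≤
      ‖∑ j, (if σ j then α j • vBlock ((j : ℕ) + 1) else -(α j • vBlock ((j : ℕ) + 1)))‖ := by
  set z : Fin m → EllOne :=
    fun j => if σ j then α j • vBlock ((j : ℕ) + 1) else -(α j • vBlock ((j : ℕ) + 1))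
  have hz (j : Fin m) (k : ℕ) : ‖z j k‖ = |α j| * ‖vBlock ((j : ℕ) + 1) k‖ := by
    by_cases h : σ j
    · simp [z, h]
    · simp only [z, h, Bool.false_eq_true, if_false, lp.coeFn_neg, lp.coeFn_smul]
      rw [Pi.neg_apply, Pi.smul_apply, norm_neg, norm_smul, Real.norm_eq_abs]
  have hzn (j : Fin m) : ‖z j‖ ≤ |α j| := by
    have : ‖z j‖ = |α j| * ‖vBlock ((j : ℕ) + 1)‖ := by
      by_cases h : σ j <;> simp [z, h, norm_smul]
    rw [this]
    exact mul_le_of_le_one_right (abs_nonneg _) (norm_vBlock_le_one _)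
  refine le_trans (sum_le_sum fun j _ => ?_)
    (lp.sum_two_mul_sum_norm_sub_le_norm_sum pairwiseDisjoint_Ico_two_pow_two_pow z)
  rw [sum_congr rfl fun k _ => hz j k, ← mul_sum, sum_Ico_norm_vBlock_succ]
  refine le_trans (le_of_eq ?_)
    (sub_le_sub_left ((lp.sum_norm_apply_le_norm (z j) _).trans (hzn j)) _)
  ring

theorem log_succ_sub_log_div_six_le (i : ℕ) :
    (Real.log (i + 1) - Real.log i) / 6 ≤ (1 - 2 * ((2 : ℝ) ^ 2 ^ i)⁻¹) * ((i : ℝ) + 2)⁻¹ := by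
  rcases Nat.eq_zero_or_pos i with rfl | hi
  · norm_num
  have hi' : (1 : ℝ) ≤ i := by exact_mod_cast hi
  have hlog : Real.log (i + 1) - Real.log i ≤ (i : ℝ)⁻¹ := by
    rw [← Real.log_div (by positivity) (by positivity)]
    calc _ ≤ ((i : ℝ) + 1) / i - 1 := Real.log_le_sub_one_of_pos (by positivity)
      _ = (i : ℝ)⁻¹ := by field_simp; ring
  have hweight : 2 * ((2 : ℝ) ^ 2 ^ i)⁻¹ ≤ 1 / 2 := by
    have : (2 : ℝ) ^ 2 ≤ 2 ^ 2 ^ i :=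
      pow_le_pow_right₀ one_le_two (Nat.le_self_pow (Nat.pos_iff_ne_zero.mp hi) 2)
    rw [← div_eq_mul_inv, div_le_div_iff₀ (by positivity) two_pos]
    linarith
  calc (Real.log (i + 1) - Real.log i) / 6 ≤ (i : ℝ)⁻¹ / 6 := by gcongr
    _ ≤ 1 / 2 * ((i : ℝ) + 2)⁻¹ := by
      rw [inv_eq_one_div, inv_eq_one_div, div_div, one_div_mul_one_div,
        div_le_div_iff₀ (by positivity) (by positivity)]
      linarith
    _ ≤ (1 - 2 * ((2 : ℝ) ^ 2 ^ i)⁻¹) * ((i : ℝ) + 2)⁻¹ := by gcongr; linarith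

theorem log_div_six_le_sum (m : ℕ) :
    Real.log m / 6 ≤ ∑ i ∈ range m, (1 - 2 * ((2 : ℝ) ^ 2 ^ i)⁻¹) * ((i : ℝ) + 2)⁻¹ :=
  calc Real.log m / 6 = ∑ i ∈ range m, (Real.log (i + 1) - Real.log i) / 6 := by
        have := sum_range_sub (fun i : ℕ => Real.log i) m
        push_cast at this
        rw [← sum_div, this, Real.log_zero, sub_zero]
    _ ≤ _ := sum_le_sum fun i _ => log_succ_sub_log_div_six_le i

theorem sum_one_sub_two_mul_mul_abs_le_radAvg {m : ℕ} (α : Fin m → ℝ) :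
    ∑ i : Fin m, (1 - 2 * ((2 : ℝ) ^ 2 ^ (i : ℕ))⁻¹) * |α i|
      ≤ radAvg m (fun i => α i • vBlock ((i : ℕ) + 1)) :=
  le_radAvg_of_forall_le (sum_one_sub_two_mul_mul_abs_le_norm_signed_sum α)

/-- Key lower bound in the ℓ¹ counterexample: for `v_i := 2^{−2^i} ∑_{k=1}^{2^{2^i}} e_k`
and any real scalars `α_1, …, α_m`,
`E‖∑ ε_i α_i v_i‖ ≥ ∑ (1 − 2^{−2^{i-1}})|α_i| − ∑ 2^{−2^{i-1}}|α_i| ≥ ∑|α_i| − 2∑ 2^{−2^{i-1}}|α_i|`,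
and in particular with `α_i = 1/(i+1)` the expectation is `≳ log m`. -/
theorem ellOne_block_lower_bound :
    (∀ (m : ℕ) (α : Fin m → ℝ),
      (∑ i : Fin m, |α i| - 2 * ∑ i : Fin m, ((2 : ℝ) ^ (2 ^ (i : ℕ)))⁻¹ * |α i|
          ≤ ∑ i : Fin m, (1 - ((2 : ℝ) ^ (2 ^ (i : ℕ)))⁻¹) * |α i|
              - ∑ i : Fin m, ((2 : ℝ) ^ (2 ^ (i : ℕ)))⁻¹ * |α i|) ∧
      (∑ i : Fin m, (1 - ((2 : ℝ) ^ (2 ^ (i : ℕ)))⁻¹) * |α i|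
          - ∑ i : Fin m, ((2 : ℝ) ^ (2 ^ (i : ℕ)))⁻¹ * |α i|
        ≤ radAvg m (fun i => α i • vBlock ((i : ℕ) + 1)))) ∧
    (∃ c : ℝ, 0 < c ∧ ∀ m : ℕ,
      c * Real.log m ≤ radAvg m (fun i : Fin m => (((i : ℕ) + 2 : ℝ))⁻¹ • vBlock ((i : ℕ) + 1))) := by
  have hsum {m : ℕ} (α : Fin m → ℝ) :
      ∑ i : Fin m, (1 - ((2 : ℝ) ^ (2 ^ (i : ℕ)))⁻¹) * |α i|
          - ∑ i : Fin m, ((2 : ℝ) ^ (2 ^ (i : ℕ)))⁻¹ * |α i|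
        = ∑ i : Fin m, (1 - 2 * ((2 : ℝ) ^ 2 ^ (i : ℕ))⁻¹) * |α i| := by
    simp only [sub_mul, one_mul, sum_sub_distrib, mul_assoc, ← mul_sum]
    ring
  refine ⟨fun m α => ⟨?_, ?_⟩, 1 / 6, by norm_num, fun m => ?_⟩
  · rw [hsum]
    simp only [sub_mul, one_mul, sum_sub_distrib, mul_assoc, ← mul_sum, le_refl]
  · exact (hsum α).trans_le (sum_one_sub_two_mul_mul_abs_le_radAvg α)
  calc 1 / 6 * Real.log m
      ≤ ∑ i ∈ range m, (1 - 2 * ((2 : ℝ) ^ 2 ^ i)⁻¹) * ((i : ℝ) + 2)⁻¹ := by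
        linarith [log_div_six_le_sum m]
    _ = ∑ i : Fin m, (1 - 2 * ((2 : ℝ) ^ 2 ^ (i : ℕ))⁻¹) * |((i : ℕ) + 2 : ℝ)⁻¹| := by
        rw [← Fin.sum_univ_eq_sum_range
          (fun i => (1 - 2 * ((2 : ℝ) ^ 2 ^ i)⁻¹) * ((i : ℝ) + 2)⁻¹)]
        exact sum_congr rfl fun i _ => by rw [abs_of_pos (by positivity)]
    _ ≤ _ := sum_one_sub_two_mul_mul_abs_le_radAvg _
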